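/- For every 0-free and rdy-free contract c, c is compliant with its dual contract dual(c), where the dual swaps internal and external sums and replaces every atom by its co-atom. -/

import Mathlib

/-! Contracts à la Castagna et al., as in "Contracts in distributed systems".
Atoms are integers; the involution `co` is negation, the success atom `e` is 0
(so that `co e = e`). Contracts use de Bruijn indices for recursion variables. -/

abbrev Atom := ℤ

def co (a : Atom) : Atom := -a

def eAtom : Atom := 0

inductive Contract : Type where
  | intSum : List (Atom × Contract) → Contract
  | extSum : List (Atom × Contract) → Contract
  | rdy    : Atom → Contract → Contract
  | recur  : Contract → Contract
  | var    : ℕ → Contract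

namespace Contract

/-- The failure contract `0` (empty internal and external sums are identified
by structural congruence). -/
def isZero (c : Contract) : Prop := c = intSum [] ∨ c = extSum []

-- Substitution of a (closed) contract `u` for de Bruijn variable `k`.
mutual
def csubst (u : Contract) : ℕ → Contract → Contract
  | k, var n => if n = k then u else var n
  | k, recur c => recur (csubst u (k+1) c)
  | k, rdy a c => rdy a (csubst u k c)
  | k, intSum l => intSum (csubstL u k l)
  | k, extSum l => extSum (csubstL u k l)
def csubstL (u : Contract) : ℕ → List (Atom × Contract) → List (Atom × Contract)
  | _, [] => []
  | k, (a, c) :: t => (a, csubst u k c) :: csubstL u k t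
end

/-- The success contract `E = rec X. e ; X`. -/
def Econ : Contract := recur (intSum [(eAtom, var 0)])

/-- `var n` occurs unguarded (not under any sum / rdy prefix). -/
inductive UnguardedVar : ℕ → Contract → Prop where
  | var : UnguardedVar n (var n)
  | recur : UnguardedVar (n+1) c → UnguardedVar n (recur c)

/-- Well-formed contracts with free variables below `k`: atoms in each sum are
pairwise distinct, recursion is guarded. -/
inductive WF : ℕ → Contract → Prop where
  | intSum : (l.map Prod.fst).Nodup → (∀ p ∈ l, WF k p.2) → WF k (intSum l)
  | extSum : (l.map Prod.fst).Nodup → (∀ p ∈ l, WF k p.2) → WF k (extSum l)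
  | rdy : WF k c → WF k (rdy a c)
  | recur : ¬ UnguardedVar 0 c → WF (k+1) c → WF k (recur c)
  | var : n < k → WF k (var n)

/-- `rdy`-free contracts. -/
inductive RdyFree : Contract → Prop where
  | intSum : (∀ p ∈ l, RdyFree p.2) → RdyFree (intSum l)
  | extSum : (∀ p ∈ l, RdyFree p.2) → RdyFree (extSum l)
  | recur : RdyFree c → RdyFree (recur c)
  | var : RdyFree (var n)

/-- `0`-free contracts: no empty sum occurs. -/
inductive ZeroFree : Contract → Prop where
  | intSum : l ≠ [] → (∀ p ∈ l, ZeroFree p.2) → ZeroFree (intSum l)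
  | extSum : l ≠ [] → (∀ p ∈ l, ZeroFree p.2) → ZeroFree (extSum l)
  | rdy : ZeroFree c → ZeroFree (rdy a c)
  | recur : ZeroFree c → ZeroFree (recur c)
  | var : ZeroFree (var n)

/-- A `rdy` prefix may occur at top level only. -/
def TopRdy (c : Contract) : Prop :=
  RdyFree c ∨ ∃ a c', c = rdy a c' ∧ RdyFree c'

end Contract

open Contract

/-- One step of participant `A` (first component) in a bilateral contract
`A says c | B says d`: rules [IntExt], [IntInt], [ExtExt], [Rdy] and the
failure rules, plus unfolding of recursion (structural congruence). -/
inductive StepA : Contract → Contract → Atom → Contract → Contract → Prop where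
  | intExt : (a, c') ∈ l → (co a, d') ∈ m →
      StepA (.intSum l) (.extSum m) a c' (.rdy (co a) d')
  | intInt : (a, c') ∈ l →
      StepA (.intSum l) (.intSum [(co a, d')]) a c' (.rdy (co a) d')
  | extExt : (a, c') ∈ l → (co a, d') ∈ m →
      StepA (.extSum l) (.extSum m) a c' (.rdy (co a) d')
  | rdy : StepA (.rdy a c) d a c d
  | intExtFail : (a, c') ∈ l → (∀ q ∈ m, co q.1 ≠ a) →
      StepA (.intSum l) (.extSum m) a Econ (.intSum [])
  | intIntFail : (a, c') ∈ l → ¬ (m ≠ [] ∧ ∀ q ∈ m, co q.1 = a) →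
      StepA (.intSum l) (.intSum m) a Econ (.intSum [])
  | extExtFail : (a, c') ∈ l → (∀ p ∈ l, ∀ q ∈ m, p.1 ≠ co q.1) →
      StepA (.extSum l) (.extSum m) a Econ (.intSum [])
  | recL : StepA (csubst (.recur c) 0 c) d a c' d' → StepA (.recur c) d a c' d'
  | recR : StepA c (csubst (.recur d) 0 d) a c' d' → StepA c (.recur d) a c' d'

/-- The two participants of a bilateral contract. -/
inductive Ptp : Type where
  | A | B
deriving DecidableEq

inductive CLabel : Type where
  | says : Ptp → Atom → CLabel
deriving DecidableEq

/-- Labelled transitions of bilateral contracts. -/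
inductive Step : Contract × Contract → CLabel → Contract × Contract → Prop where
  | left  : StepA c d a c' d' → Step (c, d) (.says .A a) (c', d')
  | right : StepA d c a d' c' → Step (c, d) (.says .B a) (c', d')

/-- Participant `p` is culpable in the bilateral contract `γ`. -/
def frown (p : Ptp) (γ : Contract × Contract) : Prop :=
  isZero (match p with | .A => γ.1 | .B => γ.2) ∨
  ((¬ ∃ γ', Step γ (.says p eAtom) γ') ∧ (∃ a γ', Step γ (.says p a) γ'))

/-- Tokens occurring in ready sets: atoms, or the `rdy` marker. -/
inductive RToken : Type where
  | atom : Atom → RToken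
  | rdy  : RToken
deriving DecidableEq

def coT : RToken → RToken
  | .atom a => .atom (co a)
  | .rdy => .rdy

/-- Ready sets. -/
def RS : Contract → Set (Set RToken)
  | .intSum [] => {∅}
  | .intSum (p :: l) => {X | ∃ q ∈ p :: l, X = {RToken.atom q.1}}
  | .extSum [] => {∅}
  | .extSum (p :: l) => {X | X = {t | ∃ q ∈ p :: l, t = RToken.atom q.1}}
  | .rdy _ _ => {{RToken.rdy}}
  | .recur c => RS c
  | .var _ => {∅}

/-- The defining clauses of compliance. -/
def CompRel' (R : Contract → Contract → Prop) : Prop :=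
  ∀ c d, R c d →
    (∀ X ∈ RS c, ∀ Y ∈ RS d,
        (∃ t ∈ X, coT t ∈ Y) ∨ RToken.rdy ∈ (X ∪ Y) \ (X ∩ Y)) ∧
    (∀ μ c' d', Step (c, d) μ (c', d') → R c' d')

/-- Compliance: the largest relation satisfying `CompRel`. -/
def Compliant (c d : Contract) : Prop := ∃ R, CompRel' R ∧ R c d

/-- A contract succeeds. -/
def Succeeds (c : Contract) : Prop :=
  (∃ l, c = .intSum l ∧ (eAtom, Econ) ∈ l) ∨
  (∃ l, c = .extSum l ∧ (eAtom, Econ) ∈ l) ∨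
  c = .rdy eAtom Econ

/-- Multi-step reduction of bilateral contracts. -/
def Reduces : Contract × Contract → Contract × Contract → Prop :=
  Relation.ReflTransGen (fun γ γ' => ∃ μ, Step γ μ γ')

/-- Bilateral well-formedness: `rdy` at top level only and at most one `rdy`. -/
def BCWF (γ : Contract × Contract) : Prop :=
  TopRdy γ.1 ∧ TopRdy γ.2 ∧ (RdyFree γ.1 ∨ RdyFree γ.2)

-- The dual contract: swap internal/external sums and complement every atom.
mutual
def dual : Contract → Contract
  | .intSum l => .extSum (dualL l)
  | .extSum l => .intSum (dualL l)
  | .rdy a c => .rdy (co a) (dual c)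
  | .recur c => .recur (dual c)
  | .var n => .var n
def dualL : List (Atom × Contract) → List (Atom × Contract)
  | [] => []
  | (a, c) :: t => (co a, dual c) :: dualL t
end


/-! Compliance is witnessed by `Contract.DualRel`: the pairs formed by an unfolding of an
admissible contract `e` and an unfolding of `dual e`, together with the intermediate states
`(e, rdy a (dual e))` and `(rdy a e, dual e)`. Since unfolding is deterministic, a step from a pair
of the first kind fires from `(e₀, dual e₀)` for a single non-`rec` unfolding `e₀` of `e`; then
`e₀` is an internal sum facing its dual, and as its atoms are distinct the partner's continuation
is the dual of the chosen one. Ready sets are invariant under unfolding of guarded recursion, and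
a nonempty sum shares a co-atom with its dual. Since `dual` is an involution, `DualRel` is
symmetric, so the moves of `B` reduce to those of `A`. -/

namespace Contract

@[simp]
theorem csubstL_eq_map (u : Contract) (k : ℕ) (l : List (Atom × Contract)) :
    csubstL u k l = l.map (fun p => (p.1, csubst u k p.2)) := by
  induction l with
  | nil => rfl
  | cons p t ih => simp [csubstL, ih]

@[simp]
theorem dualL_eq_map (l : List (Atom × Contract)) :
    dualL l = l.map (fun p => (co p.1, dual p.2)) := by
  induction l with
  | nil => rfl
  | cons p t ih => simp [dualL, ih]

theorem forall_mem_csubstL {P : Contract → Prop} {u : Contract} {k : ℕ}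
    {l : List (Atom × Contract)} :
    (∀ p ∈ csubstL u k l, P p.2) ↔ ∀ p ∈ l, P (csubst u k p.2) := by
  rw [csubstL_eq_map, List.forall_mem_map]

theorem map_fst_csubstL (u : Contract) (k : ℕ) (l : List (Atom × Contract)) :
    (csubstL u k l).map Prod.fst = l.map Prod.fst := by
  simp [Function.comp_def]

theorem forall_mem_dualL {P : Contract → Prop} {l : List (Atom × Contract)} :
    (∀ p ∈ dualL l, P p.2) ↔ ∀ p ∈ l, P (dual p.2) := by
  rw [dualL_eq_map, List.forall_mem_map]

theorem co_co (a : Atom) : co (co a) = a := neg_neg a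

theorem co_injective : Function.Injective co := neg_injective

mutual
theorem dual_dual : (c : Contract) → dual (dual c) = c
  | .intSum l => by rw [dual, dual, dualL_dualL]
  | .extSum l => by rw [dual, dual, dualL_dualL]
  | .rdy a c => by rw [dual, dual, dual_dual c, co_co]
  | .recur c => by rw [dual, dual, dual_dual c]
  | .var n => rfl
theorem dualL_dualL : (l : List (Atom × Contract)) → dualL (dualL l) = l
  | [] => rfl
  | (a, c) :: t => by rw [dualL, dualL, dual_dual c, dualL_dualL t, co_co]
end

theorem mem_dualL {l : List (Atom × Contract)} {a : Atom} {c : Contract} :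
    (a, c) ∈ dualL l ↔ (co a, dual c) ∈ l := by
  rw [dualL_eq_map]
  exact List.mem_map_of_involutive fun p => by simp [co_co, dual_dual]

theorem mem_dualL_of_mem {l : List (Atom × Contract)} {a : Atom} {c : Contract}
    (h : (a, c) ∈ l) : (co a, dual c) ∈ dualL l := by
  rwa [mem_dualL, co_co, dual_dual]

mutual
theorem dual_csubst (u : Contract) (k : ℕ) :
    (c : Contract) → dual (csubst u k c) = csubst (dual u) k (dual c)
  | .intSum l => by rw [csubst, dual, dual, csubst, dual_csubstL]
  | .extSum l => by rw [csubst, dual, dual, csubst, dual_csubstL]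
  | .rdy a c => by rw [csubst, dual, dual, csubst, dual_csubst u k c]
  | .recur c => by rw [csubst, dual, dual, csubst, dual_csubst u (k + 1) c]
  | .var n => by by_cases h : n = k <;> simp [csubst, dual, h]
theorem dual_csubstL (u : Contract) (k : ℕ) :
    (l : List (Atom × Contract)) → dualL (csubstL u k l) = csubstL (dual u) k (dualL l)
  | [] => rfl
  | (a, c) :: t => by
    rw [csubstL, dualL, dualL, csubstL, dual_csubst u k c, dual_csubstL u k t]
end

theorem UnguardedVar.dual {n : ℕ} {c : Contract} (h : UnguardedVar n c) :
    UnguardedVar n (dual c) := by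
  induction h with
  | var => exact .var
  | recur _ ih => exact .recur ih

theorem WF.dual {k : ℕ} {c : Contract} (h : WF k c) : WF k (dual c) := by
  have nodup_dualL {l : List (Atom × Contract)} (hl : (l.map Prod.fst).Nodup) :
      ((dualL l).map Prod.fst).Nodup := by
    simpa [Function.comp_def] using hl.map co_injective
  induction h with
  | intSum hl _ ih => exact .extSum (nodup_dualL hl) (forall_mem_dualL.2 ih)
  | extSum hl _ ih => exact .intSum (nodup_dualL hl) (forall_mem_dualL.2 ih)
  | rdy _ ih => exact .rdy ih
  | @recur c _ hg _ ih => exact .recur (fun h => hg (dual_dual c ▸ h.dual)) ih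
  | var hn => exact .var hn

theorem ZeroFree.dual {c : Contract} (h : ZeroFree c) : ZeroFree (dual c) := by
  induction h with
  | intSum hl _ ih => exact .extSum (by simpa using hl) (forall_mem_dualL.2 ih)
  | extSum hl _ ih => exact .intSum (by simpa using hl) (forall_mem_dualL.2 ih)
  | rdy _ ih => exact .rdy ih
  | recur _ ih => exact .recur ih
  | var => exact .var

theorem RdyFree.dual {c : Contract} (h : RdyFree c) : RdyFree (dual c) := by
  induction h with
  | intSum _ ih => exact .extSum (forall_mem_dualL.2 ih)
  | extSum _ ih => exact .intSum (forall_mem_dualL.2 ih)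
  | recur _ ih => exact .recur ih
  | var => exact .var

theorem UnguardedVar.lt_of_wf {m k : ℕ} {c : Contract} (h : UnguardedVar m c) (hc : WF k c) :
    m < k := by
  induction h generalizing k with
  | var => cases hc; assumption
  | recur _ ih => cases hc with
    | recur _ hc => exact Nat.lt_of_succ_lt_succ (ih hc)

theorem WF.not_unguardedVar {c : Contract} (h : WF 0 c) (m : ℕ) : ¬ UnguardedVar m c :=
  fun hm => Nat.not_lt_zero m (hm.lt_of_wf h)

theorem WF.mono {j k : ℕ} {c : Contract} (h : WF j c) (hjk : j ≤ k) : WF k c := by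
  induction h generalizing k with
  | intSum hl _ ih => exact .intSum hl fun p hp => ih p hp hjk
  | extSum hl _ ih => exact .extSum hl fun p hp => ih p hp hjk
  | rdy _ ih => exact .rdy (ih hjk)
  | recur hg _ ih => exact .recur hg (ih (Nat.succ_le_succ hjk))
  | var hn => exact .var (lt_of_lt_of_le hn hjk)

theorem UnguardedVar.of_csubst {u : Contract} (hu : ∀ m, ¬ UnguardedVar m u) :
    {m k : ℕ} → (c : Contract) → UnguardedVar m (csubst u k c) → UnguardedVar m c
  | _, k, .var n, h => by
    by_cases hn : n = k
    · rw [csubst, if_pos hn] at h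
      exact absurd h (hu _)
    · rwa [csubst, if_neg hn] at h
  | _, _, .recur c, h => by
    rw [csubst] at h
    cases h with
    | recur h => exact .recur (of_csubst hu c h)
  | _, _, .intSum _, h => by rw [csubst] at h; cases h
  | _, _, .extSum _, h => by rw [csubst] at h; cases h
  | _, _, .rdy _ _, h => by rw [csubst] at h; cases h

theorem WF.csubst {u c : Contract} {k : ℕ} (hu : WF 0 u) (hc : WF (k + 1) c) :
    WF k (csubst u k c) := by
  generalize hj : k + 1 = j at hc
  induction hc generalizing k with
  | intSum hl _ ih =>
    exact .intSum (by rwa [map_fst_csubstL]) (forall_mem_csubstL.2 fun p hp => ih p hp hj)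
  | extSum hl _ ih =>
    exact .extSum (by rwa [map_fst_csubstL]) (forall_mem_csubstL.2 fun p hp => ih p hp hj)
  | rdy _ ih => exact .rdy (ih hj)
  | @recur c _ hg _ ih =>
    exact .recur (fun h => hg (h.of_csubst hu.not_unguardedVar c)) (ih (by omega))
  | var =>
    rw [Contract.csubst]
    split_ifs with h
    · exact hu.mono (Nat.zero_le k)
    · exact .var (by omega)

theorem ZeroFree.csubst {u c : Contract} (hu : ZeroFree u) (hc : ZeroFree c) (k : ℕ) :
    ZeroFree (csubst u k c) := by
  induction hc generalizing k with
  | intSum hl _ ih => exact .intSum (by simpa using hl) (forall_mem_csubstL.2 fun p hp => ih p hp k)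
  | extSum hl _ ih => exact .extSum (by simpa using hl) (forall_mem_csubstL.2 fun p hp => ih p hp k)
  | rdy _ ih => exact .rdy (ih k)
  | recur _ ih => exact .recur (ih (k + 1))
  | var =>
    rw [Contract.csubst]
    split_ifs
    exacts [hu, .var]

theorem RdyFree.csubst {u c : Contract} (hu : RdyFree u) (hc : RdyFree c) (k : ℕ) :
    RdyFree (csubst u k c) := by
  induction hc generalizing k with
  | intSum _ ih => exact .intSum (forall_mem_csubstL.2 fun p hp => ih p hp k)
  | extSum _ ih => exact .extSum (forall_mem_csubstL.2 fun p hp => ih p hp k)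
  | recur _ ih => exact .recur (ih (k + 1))
  | var =>
    rw [Contract.csubst]
    split_ifs
    exacts [hu, .var]


inductive UnfoldStep : Contract → Contract → Prop where
  | recur (c : Contract) : UnfoldStep (recur c) (csubst (recur c) 0 c)

def Unfolds : Contract → Contract → Prop := Relation.ReflTransGen UnfoldStep

theorem WF.unfoldStep {c d : Contract} (hc : WF 0 c) (h : UnfoldStep c d) : WF 0 d := by
  cases h with
  | recur b => cases hc with | recur hg hb => exact (WF.recur hg hb).csubst hb

theorem ZeroFree.unfoldStep {c d : Contract} (hc : ZeroFree c) (h : UnfoldStep c d) :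
    ZeroFree d := by
  cases h with
  | recur b => cases hc with | recur hb => exact hb.recur.csubst hb 0

theorem RdyFree.unfoldStep {c d : Contract} (hc : RdyFree c) (h : UnfoldStep c d) : RdyFree d := by
  cases h with
  | recur b => cases hc with | recur hb => exact hb.recur.csubst hb 0

def IsRecur (c : Contract) : Prop := ∃ b, c = recur b

theorem UnfoldStep.right_unique : Relator.RightUnique UnfoldStep := by
  rintro _ _ _ ⟨c⟩ h
  cases h
  rfl

theorem Unfolds.eq_of_not_isRecur {c d : Contract} (h : Unfolds c d) (hc : ¬ IsRecur c) :
    d = c := by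
  rcases Relation.ReflTransGen.cases_head h with rfl | ⟨_, ⟨b⟩, _⟩
  · rfl
  · exact absurd ⟨b, rfl⟩ hc

theorem Unfolds.eq_of_not_isRecur_of_not_isRecur {e c d : Contract} (hc : Unfolds e c)
    (hd : Unfolds e d) (hc' : ¬ IsRecur c) (hd' : ¬ IsRecur d) : c = d := by
  rcases Relation.ReflTransGen.total_of_right_unique UnfoldStep.right_unique hc hd with h | h
  · exact (Unfolds.eq_of_not_isRecur h hc').symm
  · exact Unfolds.eq_of_not_isRecur h hd'

theorem UnfoldStep.dual {c d : Contract} (h : UnfoldStep c d) : UnfoldStep (dual c) (dual d) := by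
  cases h with
  | recur b => rw [dual_csubst, _root_.dual]; exact .recur _

theorem Unfolds.dual {c d : Contract} (h : Unfolds c d) : Unfolds (dual c) (dual d) :=
  Relation.ReflTransGen.lift _root_.dual (fun _ _ => UnfoldStep.dual) _ _ h

theorem not_isRecur_dual {c : Contract} (h : ¬ IsRecur c) : ¬ IsRecur (dual c) := by
  rintro ⟨b, hb⟩
  cases c <;> simp only [_root_.dual, reduceCtorEq] at hb
  exact h ⟨_, rfl⟩

structure Admissible (c : Contract) : Prop where
  wf : WF 0 c
  zeroFree : ZeroFree c
  rdyFree : RdyFree c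

theorem Admissible.dual {c : Contract} (h : Admissible c) : Admissible (dual c) :=
  ⟨h.wf.dual, h.zeroFree.dual, h.rdyFree.dual⟩

theorem Admissible.unfoldStep {c d : Contract} (hc : Admissible c) (h : UnfoldStep c d) :
    Admissible d :=
  ⟨hc.wf.unfoldStep h, hc.zeroFree.unfoldStep h, hc.rdyFree.unfoldStep h⟩

theorem Admissible.unfolds {c d : Contract} (hc : Admissible c) (h : Unfolds c d) :
    Admissible d := by
  induction h with
  | refl => exact hc
  | tail _ hs ih => exact ih.unfoldStep hs


theorem RS_intSum {l : List (Atom × Contract)} (hl : l ≠ []) :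
    RS (intSum l) = {X | ∃ q ∈ l, X = {RToken.atom q.1}} := by
  cases l with
  | nil => exact absurd rfl hl
  | cons p l => rfl

theorem RS_extSum (l : List (Atom × Contract)) :
    RS (extSum l) = {{t | ∃ q ∈ l, t = RToken.atom q.1}} := by
  cases l with
  | nil => simp [RS]
  | cons p l => rfl

theorem RS_csubst (u : Contract) :
    {k : ℕ} → (c : Contract) → ¬ UnguardedVar k c → RS (csubst u k c) = RS c
  | _, .intSum [], _ => rfl
  | _, .intSum (p :: l), _ => by
    rw [csubst, csubstL_eq_map, RS_intSum (by simp), RS_intSum (by simp)]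
    simp
  | _, .extSum l, _ => by rw [csubst, csubstL_eq_map, RS_extSum, RS_extSum]; simp
  | _, .rdy _ _, _ => rfl
  | _, .recur c, h => RS_csubst u c fun hc => h (.recur hc)
  | k, .var n, h => by
    rw [csubst, if_neg fun hn : n = k => h (hn ▸ .var)]

theorem RS_unfoldStep {c d : Contract} (hc : WF 0 c) (h : UnfoldStep c d) : RS d = RS c := by
  cases h with
  | recur b => cases hc with | recur hg _ => exact RS_csubst _ b hg

theorem RS_eq_of_unfolds {c d : Contract} (hc : WF 0 c) (h : Unfolds c d) : RS d = RS c := by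
  induction h using Relation.ReflTransGen.head_induction_on with
  | refl => rfl
  | head hs _ ih => exact (ih (hc.unfoldStep hs)).trans (RS_unfoldStep hc hs)

theorem rdy_not_mem_of_mem_RS {c : Contract} (hc : RdyFree c) {X : Set RToken} (hX : X ∈ RS c) :
    RToken.rdy ∉ X := by
  induction hc with
  | @intSum l _ _ =>
    cases l with
    | nil => simp_all [RS]
    | cons p l => obtain ⟨q, _, rfl⟩ := hX; simp
  | extSum _ _ => simp_all [RS_extSum]
  | recur _ ih => exact ih hX
  | var => simp_all [RS]

theorem exists_coT_mem_of_mem_RS_dual {k : ℕ} {c : Contract} (hw : WF k c)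
    (hu : ∀ m, ¬ UnguardedVar m c) (hz : ZeroFree c) (hr : RdyFree c)
    {X Y : Set RToken} (hX : X ∈ RS c) (hY : Y ∈ RS (dual c)) : ∃ t ∈ X, coT t ∈ Y := by
  induction hr generalizing k with
  | @intSum l _ _ =>
    cases hz with | intSum hl _ =>
    rw [RS_intSum hl] at hX
    obtain ⟨q, hq, rfl⟩ := hX
    rw [dual, RS_extSum] at hY
    subst hY
    exact ⟨RToken.atom q.1, rfl, (co q.1, dual q.2), mem_dualL_of_mem hq, rfl⟩
  | @extSum l _ _ =>
    cases hz with | extSum hl _ =>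
    rw [RS_extSum, Set.mem_singleton_iff] at hX
    subst hX
    rw [dual, RS_intSum (by simpa using hl)] at hY
    obtain ⟨⟨a, d⟩, hp, rfl⟩ := hY
    exact ⟨RToken.atom (co a), ⟨_, mem_dualL.1 hp, rfl⟩, by simp [coT, co_co]⟩
  | recur _ ih =>
    cases hw with | recur hg hw =>
    cases hz with | recur hz =>
    refine ih hw (fun m hm => ?_) hz hX hY
    cases m with
    | zero => exact hg hm
    | succ m => exact hu m (.recur hm)
  | var => exact absurd .var (hu _)


theorem StepA.exists_unfolds {c d c' d' : Contract} {a : Atom} (h : StepA c d a c' d')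
    (hc : RdyFree c) :
    ∃ c₀ d₀, Unfolds c c₀ ∧ Unfolds d d₀ ∧ ¬ IsRecur c₀ ∧ ¬ IsRecur d₀ ∧
      StepA c₀ d₀ a c' d' := by
  induction h with
  | rdy => cases hc
  | recL _ ih =>
    obtain ⟨c₀, d₀, hc₀, hd₀, hs⟩ := ih (hc.unfoldStep (.recur _))
    exact ⟨c₀, d₀, .head (.recur _) hc₀, hd₀, hs⟩
  | recR _ ih =>
    obtain ⟨c₀, d₀, hc₀, hd₀, hs⟩ := ih hc
    exact ⟨c₀, d₀, hc₀, .head (.recur _) hd₀, hs⟩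
  | _ =>
    exact ⟨_, _, .refl, .refl, by rintro ⟨_, ⟨⟩⟩, by rintro ⟨_, ⟨⟩⟩,
      by constructor <;> assumption⟩

theorem not_stepA_rdy_of_rdyFree {c z c' d' : Contract} {a b : Atom} (hc : RdyFree c) :
    ¬ StepA c (rdy b z) a c' d' := by
  intro h
  generalize hd : rdy b z = d at h
  induction h with
  | rdy => cases hc
  | recL _ ih => exact ih (hc.unfoldStep (.recur _)) hd
  | _ => cases hd

theorem StepA.of_rdy_left {e d c' d' : Contract} {a b : Atom} (h : StepA (rdy b e) d a c' d') :
    c' = e ∧ Unfolds d d' := by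
  generalize hc : rdy b e = c at h
  induction h with
  | rdy => cases hc; exact ⟨rfl, .refl⟩
  | recR _ ih =>
    obtain ⟨rfl, hd⟩ := ih hc
    exact ⟨rfl, .head (.recur _) hd⟩
  | _ => cases hc

theorem StepA.of_dual {e c' d' : Contract} {a : Atom} (he : Admissible e) (hne : ¬ IsRecur e)
    (h : StepA e (dual e) a c' d') : Admissible c' ∧ d' = rdy (co a) (dual c') := by
  cases e with
  | intSum l =>
    obtain ⟨hw, hz, hr⟩ := he
    cases hw with | intSum hnd hw =>
    cases hz with | intSum _ hz =>
    cases hr with | intSum hr =>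
    rw [dual] at h
    cases h with
    | intExt hc hd =>
      rw [mem_dualL, co_co] at hd
      have hcd := List.inj_on_of_nodup_map hnd hc hd rfl
      simp only [Prod.mk.injEq, true_and] at hcd
      exact ⟨⟨hw _ hc, hz _ hc, hr _ hc⟩, by rw [hcd, dual_dual]⟩
    | intExtFail hc hno => exact (hno _ (mem_dualL_of_mem hc) (co_co a)).elim
  | extSum l => rw [dual] at h; cases h
  | rdy => cases he.rdyFree
  | recur b => exact absurd ⟨b, rfl⟩ hne
  | var => cases h


inductive DualRel : Contract → Contract → Prop where
  | unfolds {e c d : Contract} : Admissible e → Unfolds e c → Unfolds (dual e) d → DualRel c d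
  | rdyRight {e : Contract} (a : Atom) : Admissible e → DualRel e (rdy a (dual e))
  | rdyLeft {e : Contract} (a : Atom) : Admissible e → DualRel (rdy a e) (dual e)

theorem DualRel.symm {c d : Contract} (h : DualRel c d) : DualRel d c := by
  cases h with
  | unfolds he hc hd => exact .unfolds he.dual hd (by rwa [dual_dual])
  | rdyRight a he => simpa only [dual_dual] using DualRel.rdyLeft a he.dual
  | rdyLeft a he => simpa only [dual_dual] using DualRel.rdyRight a he.dual

theorem DualRel.stepA {c d c' d' : Contract} {a : Atom} (h : DualRel c d)
    (hs : StepA c d a c' d') : DualRel c' d' := by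
  cases h with
  | @unfolds e _ _ he hc hd =>
    obtain ⟨c₀, d₀, hc₀, hd₀, hnc, hnd, hs⟩ := hs.exists_unfolds (he.unfolds hc).rdyFree
    have hed₀ : Unfolds e (dual d₀) := by
      simpa only [dual_dual] using Unfolds.dual (hd.trans hd₀)
    have hcd := Unfolds.eq_of_not_isRecur_of_not_isRecur (hc.trans hc₀) hed₀ hnc
      (not_isRecur_dual hnd)
    obtain rfl : d₀ = dual c₀ := by rw [hcd, dual_dual]
    obtain ⟨hc', rfl⟩ := hs.of_dual (he.unfolds (hc.trans hc₀)) hnc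
    exact .rdyRight _ hc'
  | rdyRight _ he => exact (not_stepA_rdy_of_rdyFree he.rdyFree hs).elim
  | rdyLeft _ he =>
    obtain ⟨rfl, hd⟩ := hs.of_rdy_left
    exact .unfolds he .refl hd

theorem DualRel.readySets_compatible {c d : Contract} (h : DualRel c d) {X Y : Set RToken}
    (hX : X ∈ RS c) (hY : Y ∈ RS d) :
    (∃ t ∈ X, coT t ∈ Y) ∨ RToken.rdy ∈ (X ∪ Y) \ (X ∩ Y) := by
  cases h with
  | unfolds he hc hd =>
    rw [RS_eq_of_unfolds he.wf hc] at hX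
    rw [RS_eq_of_unfolds he.dual.wf hd] at hY
    exact .inl (exists_coT_mem_of_mem_RS_dual he.wf he.wf.not_unguardedVar he.zeroFree
      he.rdyFree hX hY)
  | rdyRight _ he =>
    rw [RS, Set.mem_singleton_iff] at hY
    exact .inr ⟨.inr (hY ▸ rfl), fun h => rdy_not_mem_of_mem_RS he.rdyFree hX h.1⟩
  | rdyLeft _ he =>
    rw [RS, Set.mem_singleton_iff] at hX
    exact .inr ⟨.inl (hX ▸ rfl), fun h => rdy_not_mem_of_mem_RS he.dual.rdyFree hY h.2⟩

theorem compRel_dualRel : CompRel' DualRel := fun _ _ h =>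
  ⟨fun _ hX _ hY => h.readySets_compatible hX hY, fun _ _ _ hs => by
    cases hs with
    | left hs => exact h.stepA hs
    | right hs => exact (h.symm.stepA hs).symm⟩

end Contract

/-- every `0`-free, `rdy`-free contract is compliant with its dual. -/
theorem stmt5 (c : Contract) (hwf : Contract.WF 0 c)
    (h0 : Contract.ZeroFree c) (hr : Contract.RdyFree c) :
    Compliant c (dual c) :=
  ⟨DualRel, compRel_dualRel, .unfolds ⟨hwf, h0, hr⟩ .refl .refl⟩
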